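/- A graph G is a cograph if and only if every induced subgraph of G with at least two vertices contains a pair of twins. -/

import Mathlib

open SimpleGraph

def IsCograph {V : Type*} (G : SimpleGraph V) : Prop :=
  IsEmpty (SimpleGraph.pathGraph 4 ↪g G)

def AreTwins {V : Type*} (G : SimpleGraph V) (u v : V) : Prop :=
  u ≠ v ∧ (G.neighborSet u = G.neighborSet v ∨
    insert u (G.neighborSet u) = insert v (G.neighborSet v))

def DistHereditary {V : Type*} (G : SimpleGraph V) : Prop :=
  ∀ s : Set V, (G.induce s).Connected →
    ∀ u v : s, (G.induce s).dist u v = G.dist u v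

/-!
By Seinsche's theorem, a cograph `G` on at least two vertices has `G` or `Gᶜ` disconnected.
Indeed, if both were connected, pick a vertex `v`, a non-neighbour `p` of `v` and a neighbour `q`
of `v` adjacent to `p` (these exist on a path in `G - v` from a non-neighbour to a neighbour of
`v`). Every other neighbour `u` of `v` lies in the component of `q` in `G - v`, since otherwise
`p - q - v - u` is an induced `P₄`; as `G` is connected, every component of `G - v` meets the
neighbourhood of `v`, so `G - v` is connected, and so is its complement by the same argument in
`Gᶜ`. Induction on the number of vertices gives the contradiction.

Twins then exist by induction as well: cographs are closed under induced subgraphs and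
complements, twins of `Gᶜ` are twins of `G`, and in a disconnected graph either some component is
nontrivial, and twins in it are twins in `G`, or two vertices in different components are both
isolated. Conversely, the four vertices of an induced `P₄` contain no twins.
-/

namespace SimpleGraph

variable {V W : Type*} {G : SimpleGraph V} {H : SimpleGraph W}

lemma IsCograph.of_embedding (hG : IsCograph G) (f : H ↪g G) : IsCograph H :=
  ⟨fun e => hG.false (f.comp e)⟩

lemma IsCograph.induce (hG : IsCograph G) (s : Set V) : IsCograph (G.induce s) :=
  hG.of_embedding (Embedding.induce s)

def pathGraphFourIsoCompl : pathGraph 4 ≃g (pathGraph 4)ᶜ where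
  toEquiv := ⟨![1, 3, 0, 2], ![2, 0, 3, 1], by decide, by decide⟩
  map_rel_iff' := by
    intro a b
    simp only [Equiv.coe_fn_mk, compl_adj, pathGraph_adj]
    revert a b
    decide

lemma IsCograph.compl (hG : IsCograph G) : IsCograph Gᶜ := by
  refine ⟨fun f => hG.false ?_⟩
  have f' : (pathGraph 4)ᶜ ↪g G := by simpa only [compl_compl] using Embedding.complEquiv f
  exact f'.comp pathGraphFourIsoCompl.toEmbedding

lemma compl_induce (s : Set V) : (G.induce s)ᶜ = Gᶜ.induce s := by
  ext a b
  simp [Subtype.coe_ne_coe]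

lemma IsCograph.false_of_induced_path (hG : IsCograph G) {a b c d : V}
    (hab : G.Adj a b) (hbc : G.Adj b c) (hcd : G.Adj c d)
    (hac : a ≠ c) (hbd : b ≠ d) (had : a ≠ d)
    (hac' : ¬G.Adj a c) (hbd' : ¬G.Adj b d) (had' : ¬G.Adj a d) : False := by
  refine hG.false ⟨⟨![a, b, c, d], fun i j hij => ?_⟩, fun {i j} => ?_⟩
  · fin_cases i <;> fin_cases j <;> simp_all [hab.ne, hbc.ne, hcd.ne, eq_comm]
  · show G.Adj (![a, b, c, d] i) (![a, b, c, d] j) ↔ (pathGraph 4).Adj i j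
    fin_cases i <;> fin_cases j <;> simp_all [pathGraph_adj, G.adj_comm]

lemma neighborSet_compl_eq_compl_insert (v : V) :
    Gᶜ.neighborSet v = (insert v (G.neighborSet v))ᶜ := by
  ext w
  simp [eq_comm]

lemma insert_neighborSet_compl (v : V) : insert v (Gᶜ.neighborSet v) = (G.neighborSet v)ᶜ := by
  ext w
  rcases eq_or_ne v w with rfl | h
  · simp
  · simp [h, h.symm]

lemma areTwins_compl {u v : V} : AreTwins Gᶜ u v ↔ AreTwins G u v := by
  rw [AreTwins, AreTwins, insert_neighborSet_compl, insert_neighborSet_compl,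
    neighborSet_compl_eq_compl_insert, neighborSet_compl_eq_compl_insert, compl_inj_iff,
    compl_inj_iff, or_comm]

lemma areTwins_iff {u v : V} : AreTwins G u v ↔ u ≠ v ∧
    ((∀ x, G.Adj u x ↔ G.Adj v x) ∨ ∀ x, (x = u ∨ G.Adj u x) ↔ (x = v ∨ G.Adj v x)) := by
  simp only [AreTwins, Set.ext_iff, Set.mem_insert_iff, mem_neighborSet]

lemma AreTwins.map (φ : H ≃g G) {a b : W} (h : AreTwins H a b) : AreTwins G (φ a) (φ b) := by
  rw [areTwins_iff] at h ⊢
  simpa only [φ.surjective.forall, φ.map_adj_iff, φ.injective.eq_iff, φ.injective.ne_iff] using h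

lemma not_areTwins_pathGraph_four (a b : Fin 4) : ¬AreTwins (pathGraph 4) a b := by
  rw [areTwins_iff]
  simp only [pathGraph_adj]
  revert a b
  decide

lemma neighborSet_eq_image_induce {s : Set V} {u : s} (hu : G.neighborSet u ⊆ s) :
    G.neighborSet u = (↑) '' (G.induce s).neighborSet u := by
  ext x
  exact ⟨fun hx => ⟨⟨x, hu hx⟩, hx, rfl⟩, by rintro ⟨y, hy, rfl⟩; exact hy⟩

lemma AreTwins.of_induce {s : Set V} (hs : ∀ x ∈ s, G.neighborSet x ⊆ s) {u v : s}
    (h : AreTwins (G.induce s) u v) : AreTwins G u v := by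
  obtain ⟨hne, h⟩ := h
  refine ⟨Subtype.coe_ne_coe.2 hne, ?_⟩
  rw [neighborSet_eq_image_induce (hs u u.2), neighborSet_eq_image_induce (hs v v.2),
    ← Set.image_insert_eq, ← Set.image_insert_eq]
  rcases h with h | h <;> simp only [h, true_or, or_true]

lemma exists_adj_reachable_induce_compl_singleton (hG : G.Preconnected) {v : V}
    (x : ({v}ᶜ : Set V)) :
    ∃ u : ({v}ᶜ : Set V), G.Adj v u ∧ (G.induce {v}ᶜ).Reachable x u := by
  obtain ⟨w⟩ := hG x v
  obtain ⟨d, -, ⟨hfst, hx⟩, hsnd⟩ := w.exists_boundary_dart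
    {z | ∃ hz : z ≠ v, (G.induce {v}ᶜ).Reachable x ⟨z, hz⟩} ⟨x.2, .rfl⟩ (fun h => h.1 rfl)
  rcases eq_or_ne d.snd v with hv | hv
  · exact ⟨⟨d.fst, hfst⟩, hv ▸ d.adj.symm, hx⟩
  · exact (hsnd ⟨hv, hx.trans (Adj.reachable (G := G.induce {v}ᶜ) d.adj)⟩).elim

lemma IsCograph.reachable_induce_compl_singleton (hG : IsCograph G) {v : V}
    {p q u : ({v}ᶜ : Set V)} (hpq : G.Adj p q) (hpv : ¬G.Adj p v) (hqv : G.Adj q v)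
    (hvu : G.Adj v u) : (G.induce {v}ᶜ).Reachable q u := by
  by_contra hqu
  have hpu : ¬(G.induce {v}ᶜ).Reachable p u :=
    fun h => hqu ((Adj.reachable (G := G.induce {v}ᶜ) hpq).symm.trans h)
  have separated : ∀ {x y : ({v}ᶜ : Set V)}, ¬(G.induce {v}ᶜ).Reachable x y →
      (x : V) ≠ y ∧ ¬G.Adj x y :=
    fun h => ⟨fun hxy => h (Subtype.ext hxy ▸ .rfl), fun hxy => h (Adj.reachable hxy)⟩
  exact hG.false_of_induced_path hpq hqv hvu p.2 (separated hqu).1 (separated hpu).1 hpv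
    (separated hqu).2 (separated hpu).2

lemma IsCograph.preconnected_induce_compl_singleton (hG : IsCograph G) (hc : G.Preconnected)
    (hcc : Gᶜ.Preconnected) (v : V) : (G.induce {v}ᶜ).Preconnected := by
  intro x y
  have : Nontrivial V := ⟨⟨x, v, x.2⟩⟩
  obtain ⟨w, hvw⟩ := hcc.exists_adj_of_nontrivial v
  obtain ⟨w', hwy, hw⟩ := exists_adj_reachable_induce_compl_singleton hc ⟨w, hvw.ne.symm⟩
  obtain ⟨d, -, hp, hq⟩ := hw.some.exists_boundary_dart {z | ¬G.Adj v z} hvw.2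
    (not_not.2 hwy)
  have hcenter : ∀ z : ({v}ᶜ : Set V), G.Adj v z → (G.induce {v}ᶜ).Reachable d.snd z :=
    fun z hz =>
      hG.reachable_induce_compl_singleton d.adj (fun h => hp h.symm) (not_not.1 hq).symm hz
  obtain ⟨x', hx', hxx'⟩ := exists_adj_reachable_induce_compl_singleton hc x
  obtain ⟨y', hy', hyy'⟩ := exists_adj_reachable_induce_compl_singleton hc y
  exact hxx'.trans ((hcenter x' hx').symm.trans ((hcenter y' hy').trans hyy'.symm))

theorem IsCograph.not_preconnected_or_not_preconnected_compl [Finite V] [Nontrivial V]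
    (hG : IsCograph G) : ¬G.Preconnected ∨ ¬Gᶜ.Preconnected := by
  revert ‹Nontrivial V› G
  induction V using Finite.induction_subsingleton_or_nontrivial with
  | hbase V =>
    intro _ _
    exact (false_of_nontrivial_of_subsingleton V).elim
  | hstep V ih =>
    intro G _ hG
    by_contra! ⟨hc, hcc⟩
    obtain ⟨v⟩ : Nonempty V := inferInstance
    have hH := hG.preconnected_induce_compl_singleton hc hcc v
    have hHc : (G.induce {v}ᶜ)ᶜ.Preconnected := by
      rw [compl_induce]
      exact hG.compl.preconnected_induce_compl_singleton hcc (by rwa [compl_compl]) v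
    rcases subsingleton_or_nontrivial ({v}ᶜ : Set V) with hW | hW
    · obtain ⟨a, ha⟩ := hc.exists_adj_of_nontrivial v
      obtain ⟨b, hb⟩ := hcc.exists_adj_of_nontrivial v
      have hab : a = b := congrArg Subtype.val
        (Subsingleton.elim (⟨a, ha.ne.symm⟩ : ({v}ᶜ : Set V)) ⟨b, hb.ne.symm⟩)
      exact hb.2 (hab ▸ ha)
    · rcases ih _ (Finite.card_subtype_lt (x := v) (by simp)) (hG.induce {v}ᶜ) with h | h
      · exact h hH
      · exact h hHc

lemma exists_areTwins_of_not_preconnected (hG : ¬G.Preconnected)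
    (ih : ∀ s : Set V, s ≠ Set.univ → Nontrivial s → ∃ u v : s, AreTwins (G.induce s) u v) :
    ∃ u v, AreTwins G u v := by
  have isolated_or_twins : ∀ x y, ¬G.Reachable x y → G.IsIsolated x ∨ ∃ u v, AreTwins G u v := by
    refine fun x y hxy => or_iff_not_imp_left.2 fun hx => ?_
    obtain ⟨x', hxx'⟩ := exists_adj_iff_not_isIsolated.2 hx
    have hclosed : ∀ z ∈ {z | G.Reachable x z}, G.neighborSet z ⊆ {z | G.Reachable x z} :=
      fun z hz w hw => hz.trans (Adj.reachable hw)
    obtain ⟨u, v, huv⟩ := ih {z | G.Reachable x z} (fun h => hxy (Set.eq_univ_iff_forall.1 h y))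
      ⟨⟨⟨x, .rfl⟩, ⟨x', hxx'.reachable⟩, fun h => hxx'.ne (congrArg Subtype.val h)⟩⟩
    exact ⟨u, v, huv.of_induce hclosed⟩
  simp only [Preconnected, not_forall] at hG
  obtain ⟨a, b, hab⟩ := hG
  rcases isolated_or_twins a b hab with ha | htwins
  · rcases isolated_or_twins b a (fun h => hab h.symm) with hb | htwins
    · exact ⟨a, b, fun h => hab (h ▸ .rfl), Or.inl (by simp [ha, hb])⟩
    · exact htwins
  · exact htwins

theorem IsCograph.exists_areTwins [Finite V] [Nontrivial V] (hG : IsCograph G) :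
    ∃ u v, AreTwins G u v := by
  revert ‹Nontrivial V› G
  induction V using Finite.induction_subsingleton_or_nontrivial with
  | hbase V =>
    intro _ _
    exact (false_of_nontrivial_of_subsingleton V).elim
  | hstep V ih =>
    intro G _ hG
    have ih' : ∀ H : SimpleGraph V, IsCograph H → ∀ s : Set V, s ≠ Set.univ → Nontrivial s →
        ∃ u v : s, AreTwins (H.induce s) u v := by
      intro H hH s hs _
      obtain ⟨x, hx⟩ := (Set.ne_univ_iff_exists_notMem s).1 hs
      exact ih s (Finite.card_subtype_lt hx) (hH.induce s)
    rcases hG.not_preconnected_or_not_preconnected_compl with h | h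
    · exact exists_areTwins_of_not_preconnected h (ih' G hG)
    · obtain ⟨u, v, huv⟩ := exists_areTwins_of_not_preconnected h (ih' Gᶜ hG.compl)
      exact ⟨u, v, areTwins_compl.1 huv⟩

end SimpleGraph

theorem stmt4 {V : Type*} [Fintype V] (G : SimpleGraph V) :
    IsCograph G ↔
      ∀ s : Set V, 2 ≤ s.ncard → ∃ u v : s, AreTwins (G.induce s) u v := by
  refine ⟨fun hG s hs => ?_, fun h => ⟨fun f => ?_⟩⟩
  · have : Nontrivial s := (Set.one_lt_ncard_iff_nontrivial.1 hs).coe_sort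
    exact (hG.induce s).exists_areTwins
  · obtain ⟨u, v, huv⟩ := h (Set.range f) (by simp [Set.ncard_range_of_injective f.injective])
    exact not_areTwins_pathGraph_four _ _ (huv.map f.isoInduceRange.symm)
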